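/- arXiv:1510.00911 — 6 statements merged into one kernel-verified Lean document; each statement's English description precedes it below -/
import Mathlib

section
/- Every subautomaton of a retractable automaton is retractable. -/
universe u v

/-- The transition function extended to words (`X*`). -/
def deltaStar {A X : Type*} (δ : A → X → A) : A → List X → A
  | a, [] => a
  | a, x :: p => deltaStar δ (δ a x) p

/-- `B` is a subautomaton of the automaton with transition `δ`. -/
def IsSubaut {A X : Type*} (δ : A → X → A) (B : Set A) : Prop :=
  B.Nonempty ∧ ∀ b ∈ B, ∀ x : X, δ b x ∈ B

/-- `φ` is a retract homomorphism of the automaton onto the subautomaton `B`: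
a homomorphism of `A` onto `B` leaving the elements of `B` fixed. -/
def IsRetractHom {A X : Type*} (δ : A → X → A) (B : Set A) (φ : A → A) : Prop :=
  (∀ a, φ a ∈ B) ∧ (∀ b ∈ B, φ b = b) ∧ ∀ a x, φ (δ a x) = δ (φ a) x

/-- `B` is a retract subautomaton. -/
def IsRetract {A X : Type*} (δ : A → X → A) (B : Set A) : Prop :=
  ∃ φ, IsRetractHom δ B φ

/-- An automaton is retractable if every subautomaton is retract. -/
def Retractable {A X : Type*} (δ : A → X → A) : Prop :=
  ∀ B, IsSubaut δ B → IsRetract δ B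

/-- Retractability of the subautomaton on the carrier `D` (homomorphisms are
represented by functions on the ambient state set, restricted to `D`). -/
def RetractableOn {A X : Type*} (δ : A → X → A) (D : Set A) : Prop :=
  ∀ C ⊆ D, IsSubaut δ C →
    ∃ φ : A → A, (∀ a ∈ D, φ a ∈ C) ∧ (∀ c ∈ C, φ c = c) ∧
      ∀ a ∈ D, ∀ x, φ (δ a x) = δ (φ a) x

/-- The principal subautomaton `R(a) = δ(a, X*)` generated by `a`. -/
def Rset {A X : Type*} (δ : A → X → A) (a : A) : Set A :=
  {b | ∃ p : List X, deltaStar δ a p = b}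

/-- The `R`-class `R_a = {b : R(b) = R(a)}`. -/
def Rclass {A X : Type*} (δ : A → X → A) (a : A) : Set A :=
  {b | Rset δ b = Rset δ a}

/-- `R[a] = R(a) − R_a`. -/
def Rideal {A X : Type*} (δ : A → X → A) (a : A) : Set A :=
  Rset δ a \ Rclass δ a

/-- The Rees congruence induced by `B`: two states are related iff they are
equal or both lie in `B`. -/
def reesRel {A : Type*} (B : Set A) (u v : A) : Prop :=
  u = v ∨ (u ∈ B ∧ v ∈ B)

/-- A minimal subautomaton: a subautomaton with no proper subautomaton. -/
def IsMinimalSubaut {A X : Type*} (δ : A → X → A) (B : Set A) : Prop :=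
  IsSubaut δ B ∧ ∀ C ⊆ B, IsSubaut δ C → C = B

/-- The automaton has a kernel: a subautomaton contained in every subautomaton. -/
def HasKernel {A X : Type*} (δ : A → X → A) : Prop :=
  ∃ K, IsSubaut δ K ∧ ∀ B, IsSubaut δ B → K ⊆ B

/-- The principal factor `R{a}` (the Rees factor of `R(a)` modulo `R[a]`,
described via the Rees congruence) is strongly connected. -/
def FactorSC {A X : Type*} (δ : A → X → A) (a : A) : Prop :=
  ∀ b ∈ Rset δ a, ∀ c ∈ Rset δ a,
    ∃ p : List X, p ≠ [] ∧ reesRel (Rideal δ a) (deltaStar δ b p) c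

/-- The principal factor `R{a}` is a strongly trap-connected non-trivial
one-trap automaton (with trap the class of `t`). -/
def FactorSTC {A X : Type*} (δ : A → X → A) (a : A) : Prop :=
  ∃ t ∈ Rset δ a,
    (∀ x, reesRel (Rideal δ a) (δ t x) t) ∧
    (∃ b ∈ Rset δ a, ¬ reesRel (Rideal δ a) b t) ∧
    (∀ b ∈ Rset δ a, (∀ x, reesRel (Rideal δ a) (δ b x) b) → reesRel (Rideal δ a) b t) ∧
    (∀ b ∈ Rset δ a, ∀ c ∈ Rset δ a, ¬ reesRel (Rideal δ a) b t →
      ∃ p : List X, p ≠ [] ∧ reesRel (Rideal δ a) (deltaStar δ b p) c)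

/-- The principal factor `R{a}` is a strongly trapped non-trivial one-trap
automaton (with trap the class of `t`). -/
def FactorST {A X : Type*} (δ : A → X → A) (a : A) : Prop :=
  ∃ t ∈ Rset δ a,
    (∃ b ∈ Rset δ a, ¬ reesRel (Rideal δ a) b t) ∧
    (∀ b ∈ Rset δ a, (∀ x, reesRel (Rideal δ a) (δ b x) b) → reesRel (Rideal δ a) b t) ∧
    (∀ b ∈ Rset δ a, ∀ x, reesRel (Rideal δ a) (δ b x) t)

/-- Semiconnected: every principal factor is strongly connected or strongly
trap-connected. -/
def Semiconnected {A X : Type*} (δ : A → X → A) : Prop :=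
  ∀ a, FactorSC δ a ∨ FactorSTC δ a

/-- The subautomaton on `D` is semiconnected, via the characterization: for
every subautomaton `C ⊆ D` and every `a ∈ C` there are `b ∈ C` and a nonempty
word `p` with `a = δ(b,p)`. -/
def SemiconnectedOn {A X : Type*} (δ : A → X → A) (D : Set A) : Prop :=
  ∀ C ⊆ D, IsSubaut δ C → ∀ a ∈ C, ∃ b ∈ C, ∃ p : List X, p ≠ [] ∧ deltaStar δ b p = a

/-- The automaton is a dilation of its subautomaton `B`. -/
def IsDilationOf {A X : Type*} (δ : A → X → A) (B : Set A) : Prop :=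
  IsSubaut δ B ∧ ∃ φ : A → A, (∀ a, φ a ∈ B) ∧ (∀ b ∈ B, φ b = b) ∧
    ∀ a x, δ a x = δ (φ a) x

/-- Extension of a partial transition function (`none` = the removed trap)
to words. -/
def pStar {C X : Type*} (d : C → X → Option C) : C → List X → Option C
  | a, [] => some a
  | a, x :: p => (d a x).bind fun b => pStar d b p

/-- The data of the Construction: a finite tree `(T, le)` with least element
`i0`; `C i` is the trap-removed part `A⁰ᵢ` of the automaton `Aᵢ`, with partial
transition `d i` (`none` means the trap); `A_{i0}` is strongly connected and
the other `Aᵢ` are non-trivial strongly trap-connected one-trap automata;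
`Φ i j` are the composite partial homomorphisms along covering chains
(given here as coherent data whose covering components satisfy conditions
(ii) and (iii)); `δ'` is the glued transition function on `A = ⋃ A⁰ᵢ`. -/
def ConstructionSpec {X : Type*} (T : Type*) (le : T → T → Prop) (i0 : T)
    (C : T → Type*) (d : ∀ i, C i → X → Option (C i))
    (Φ : ∀ i j, le j i → C i → C j)
    (δ' : (Σ i, C i) → X → Σ i, C i) : Prop :=
  (∀ i, le i i) ∧ (∀ i j, le i j → le j i → i = j) ∧
  (∀ i j k, le i j → le j k → le i k) ∧
  Finite T ∧
  (∀ S : Set T, S.Nonempty → (∃ u, ∀ i ∈ S, le i u) → ∃ g ∈ S, ∀ i ∈ S, le i g) ∧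
  (∀ i, le i0 i) ∧
  Nonempty (C i0) ∧
  (∀ (a : C i0) (x : X), (d i0 a x).isSome) ∧
  (∀ a b : C i0, ∃ p : List X, p ≠ [] ∧ pStar (d i0) a p = some b) ∧
  (∀ i, i ≠ i0 → Nonempty (C i) ∧
    (∀ a b : C i, ∃ p : List X, p ≠ [] ∧ pStar (d i) a p = some b) ∧
    (∀ a : C i, ∃ p : List X, p ≠ [] ∧ pStar (d i) a p = none)) ∧
  (∀ i (h : le i i) (a : C i), Φ i i h a = a) ∧
  (∀ i j k (h1 : le j i) (h2 : le k j) (h3 : le k i) (a : C i),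
    Φ j k h2 (Φ i j h1 a) = Φ i k h3 a) ∧
  (∀ i j (h : le j i), i ≠ j → (∀ k, le j k → le k i → k = j ∨ k = i) →
    (∀ (a : C i) (x : X) (b : C i),
      d i a x = some b → d j (Φ i j h a) x = some (Φ i j h b)) ∧
    ∃ (a : C i) (x : X), d i a x = none ∧ (d j (Φ i j h a) x).isSome) ∧
  (∀ i (a : C i) (x : X), ∃ (j : T) (hj : le j i) (b : C j),
    δ' ⟨i, a⟩ x = ⟨j, b⟩ ∧ d j (Φ i j hj a) x = some b ∧
    ∀ k (hk : le k i), (d k (Φ i k hk a) x).isSome → le k j)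

namespace IsSubaut

variable {A X : Type*} {δ : A → X → A} {B : Set A}

def restrict (hB : IsSubaut δ B) : B → X → B :=
  fun b x => ⟨δ b x, hB.2 b b.2 x⟩

theorem image_val (hB : IsSubaut δ B) {C : Set B} (hC : IsSubaut hB.restrict C) :
    IsSubaut δ (Subtype.val '' C) := by
  obtain ⟨c, hc⟩ := hC.1
  refine ⟨⟨c, c, hc, rfl⟩, ?_⟩
  rintro _ ⟨c, hc, rfl⟩ x
  exact ⟨_, hC.2 c hc x, rfl⟩

theorem isRetract_of_image_val (hB : IsSubaut δ B) {C : Set B}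
    (hC : IsRetract δ (Subtype.val '' C)) : IsRetract hB.restrict C := by
  obtain ⟨φ, hφC, hφfix, hφhom⟩ := hC
  have hφB : ∀ a, φ a ∈ B := fun a => by
    obtain ⟨c, -, hc⟩ := hφC a
    exact hc ▸ c.2
  refine ⟨fun b => ⟨φ b, hφB b⟩, fun b => ?_, fun c hc => ?_, fun b x => ?_⟩
  · obtain ⟨c, hc, hφc⟩ := hφC b
    convert hc
    exact Subtype.ext hφc.symm
  · exact Subtype.ext (hφfix c ⟨c, hc, rfl⟩)
  · exact Subtype.ext (hφhom b x)

end IsSubaut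

/-- Every subautomaton of a retractable automaton is retractable. -/
theorem stmt_0 {A X : Type*} (δ : A → X → A) (h : Retractable δ)
    (B : Set A) (hB : IsSubaut δ B) :
    Retractable (fun (b : B) (x : X) => (⟨δ b x, hB.2 b b.2 x⟩ : B)) :=
  fun _ hC => hB.isRetract_of_image_val (h _ (hB.image_val hC))
end

section
/- Let A be a retractable automaton and {a_i : i ∈ I} a family of states such that R(a_i) ⊆ R(b) for some fixed state b, where R(a) = δ(a, X*) is the principal subautomaton generated by a. Then there exists an index j ∈ I such that R(a_i) ⊆ R(a_j) for all i ∈ I. -/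
universe u v

/-!
Let `B = ⋃ᵢ R(aᵢ)` and let `φ` be a retraction of `A` onto `B`. Then `φ b ∈ R(aⱼ)` for some `j`.
Each `aᵢ = δ(b, p)` lies in `B`, so `aᵢ = φ (δ(b, p)) = δ(φ b, p) ∈ R(φ b) ⊆ R(aⱼ)`.
-/

section Automaton

variable {A X : Type*} (δ : A → X → A)

lemma deltaStar_append (a : A) (p q : List X) :
    deltaStar δ a (p ++ q) = deltaStar δ (deltaStar δ a p) q := by
  induction p generalizing a with
  | nil => rfl
  | cons x p ih => exact ih (δ a x)

lemma deltaStar_comp_hom {φ : A → A} (hφ : ∀ a x, φ (δ a x) = δ (φ a) x) (a : A) (p : List X) :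
    φ (deltaStar δ a p) = deltaStar δ (φ a) p := by
  induction p generalizing a with
  | nil => rfl
  | cons x p ih => simp only [deltaStar, ih, hφ]

lemma mem_Rset_self (a : A) : a ∈ Rset δ a :=
  ⟨[], rfl⟩

lemma Rset_subset_Rset_of_mem {a c : A} (hc : c ∈ Rset δ a) : Rset δ c ⊆ Rset δ a := by
  obtain ⟨p, rfl⟩ := hc
  rintro d ⟨q, rfl⟩
  exact ⟨p ++ q, deltaStar_append δ a p q⟩

lemma apply_mem_Rset {a c : A} (hc : c ∈ Rset δ a) (x : X) : δ c x ∈ Rset δ a :=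
  Rset_subset_Rset_of_mem δ hc ⟨[x], rfl⟩

lemma isSubaut_iUnion_Rset {I : Type*} [Nonempty I] (a : I → A) :
    IsSubaut δ (⋃ i, Rset δ (a i)) := by
  refine ⟨?_, fun c hc x => ?_⟩
  · obtain ⟨i⟩ := ‹Nonempty I›
    exact ⟨a i, Set.mem_iUnion.2 ⟨i, mem_Rset_self δ (a i)⟩⟩
  · obtain ⟨i, hi⟩ := Set.mem_iUnion.1 hc
    exact Set.mem_iUnion.2 ⟨i, apply_mem_Rset δ hi x⟩

lemma mem_Rset_apply_of_fixed {φ : A → A} (hφ : ∀ a x, φ (δ a x) = δ (φ a) x) {a b : A}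
    (ha : a ∈ Rset δ b) (hfix : φ a = a) : a ∈ Rset δ (φ b) := by
  obtain ⟨p, rfl⟩ := ha
  exact ⟨p, by rw [← deltaStar_comp_hom δ hφ, hfix]⟩

end Automaton

/-- Lemma 2. -/
theorem stmt_1 {A X : Type*} (δ : A → X → A) (h : Retractable δ)
    {I : Type*} [Nonempty I] (a : I → A) (b : A)
    (hab : ∀ i, Rset δ (a i) ⊆ Rset δ b) :
    ∃ j : I, ∀ i : I, Rset δ (a i) ⊆ Rset δ (a j) := by
  obtain ⟨φ, hφB, hφfix, hφhom⟩ := h _ (isSubaut_iUnion_Rset δ a)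
  obtain ⟨j, hj⟩ := Set.mem_iUnion.1 (hφB b)
  refine ⟨j, fun i => ?_⟩
  have hai : a i ∈ Rset δ (φ b) :=
    mem_Rset_apply_of_fixed δ hφhom (hab i (mem_Rset_self δ (a i)))
      (hφfix _ (Set.mem_iUnion.2 ⟨i, mem_Rset_self δ (a i)⟩))
  exact (Rset_subset_Rset_of_mem δ hai).trans (Rset_subset_Rset_of_mem δ hj)
end

section
/- Every subautomaton of a principal subautomaton of a retractable automaton is itself a principal subautomaton. -/
universe u v

theorem map_deltaStar {A X : Type*} {δ : A → X → A} {φ : A → A}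
    (hφ : ∀ a x, φ (δ a x) = δ (φ a) x) (a : A) (p : List X) :
    φ (deltaStar δ a p) = deltaStar δ (φ a) p := by
  induction p generalizing a with
  | nil => rfl
  | cons x p ih => simp only [deltaStar, ih, hφ]

theorem IsSubaut.deltaStar_mem {A X : Type*} {δ : A → X → A} {B : Set A}
    (hB : IsSubaut δ B) {a : A} (ha : a ∈ B) (p : List X) : deltaStar δ a p ∈ B := by
  induction p generalizing a with
  | nil => exact ha
  | cons x p ih => exact ih (hB.2 a ha x)

theorem IsSubaut.Rset_subset {A X : Type*} {δ : A → X → A} {B : Set A}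
    (hB : IsSubaut δ B) {a : A} (ha : a ∈ B) : Rset δ a ⊆ B := by
  rintro _ ⟨p, rfl⟩
  exact hB.deltaStar_mem ha p

/-- Each `c = δ(b, p)` in `B` equals `φ c = δ(φ b, p)`. -/
theorem IsRetractHom.eq_Rset_of_subset {A X : Type*} {δ : A → X → A} {B : Set A} {φ : A → A}
    (hφ : IsRetractHom δ B φ) (hB : IsSubaut δ B) {b : A} (hsub : B ⊆ Rset δ b) :
    B = Rset δ (φ b) := by
  obtain ⟨hφB, hφfix, hφhom⟩ := hφ
  refine Set.Subset.antisymm ?_ (hB.Rset_subset (hφB b))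
  intro c hc
  obtain ⟨p, rfl⟩ := hsub hc
  exact ⟨p, by rw [← map_deltaStar hφhom, hφfix _ hc]⟩

/-- Corollary 1: every subautomaton of a principal subautomaton
of a retractable automaton is principal. -/
theorem stmt_2 {A X : Type*} (δ : A → X → A) (h : Retractable δ)
    (b : A) (B : Set A) (hB : IsSubaut δ B) (hsub : B ⊆ Rset δ b) :
    ∃ c : A, B = Rset δ c := by
  obtain ⟨φ, hφ⟩ := h B hB
  exact ⟨φ b, hφ.eq_Rset_of_subset hB hsub⟩
end

section
/- A strong direct sum of retractable automata is retractable. That is, if A is the disjoint union of subautomata A_i (i ∈ I), each A_i is retractable, and for every pair (i,j) there is a homomorphism of A_i into A_j, then A is retractable. -/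
universe u v

/-!
A subautomaton `B` of the sum meets each summand `C i` in a set `Bᵢ` that is either empty or a
subautomaton of `C i`. A retraction of the sum onto `B` is glued from one map per summand: where
`Bᵢ` is nonempty, the retraction of `C i` onto `Bᵢ`; where `Bᵢ` is empty, a homomorphism of `C i`
into a summand `C j` that meets `B`, followed by the retraction of `C j` onto `Bⱼ`.
-/

section SigmaAutomaton

variable {X I : Type*} {C : I → Type*} (δ : ∀ i, C i → X → C i)

def sigmaDelta (p : Σ i, C i) (x : X) : Σ i, C i :=
  ⟨p.1, δ p.1 p.2 x⟩

/-- The restriction to the summand `C i` of a retract homomorphism of the sum onto `B`. -/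
def IsComponentRetractHom (B : Set (Σ i, C i)) (i : I) (F : C i → Σ j, C j) : Prop :=
  (∀ c, F c ∈ B) ∧ (∀ c ∈ Sigma.mk i ⁻¹' B, F c = ⟨i, c⟩) ∧
    ∀ c x, F (δ i c x) = sigmaDelta δ (F c) x

variable {δ} {B : Set (Σ i, C i)}

theorem isRetractHom_sigma {F : ∀ i, C i → Σ j, C j}
    (hF : ∀ i, IsComponentRetractHom δ B i (F i)) :
    IsRetractHom (sigmaDelta δ) B (fun p => F p.1 p.2) :=
  ⟨fun p => (hF p.1).1 p.2, fun b hb => (hF b.1).2.1 b.2 hb, fun p x => (hF p.1).2.2 p.2 x⟩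

theorem IsSubaut.preimage_sigmaMk (hB : IsSubaut (sigmaDelta δ) B) {i : I}
    (hi : (Sigma.mk i ⁻¹' B).Nonempty) : IsSubaut (δ i) (Sigma.mk i ⁻¹' B) :=
  ⟨hi, fun c hc x => hB.2 ⟨i, c⟩ hc x⟩

theorem IsSubaut.exists_componentRetractHom (hB : IsSubaut (sigmaDelta δ) B) {i : I}
    (hret : Retractable (δ i)) (hi : (Sigma.mk i ⁻¹' B).Nonempty) :
    ∃ F, IsComponentRetractHom δ B i F := by
  obtain ⟨φ, hφB, hφfix, hφhom⟩ := hret _ (hB.preimage_sigmaMk hi)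
  exact ⟨fun c => ⟨i, φ c⟩, hφB, fun c hc => congrArg (Sigma.mk i) (hφfix c hc),
    fun c x => congrArg (Sigma.mk i) (hφhom c x)⟩

theorem IsComponentRetractHom.comp {i j : I} {F : C j → Σ k, C k} {ψ : C i → C j}
    (hF : IsComponentRetractHom δ B j F) (hψ : ∀ a x, ψ (δ i a x) = δ j (ψ a) x)
    (hi : Sigma.mk i ⁻¹' B = ∅) : IsComponentRetractHom δ B i (F ∘ ψ) :=
  ⟨fun c => hF.1 (ψ c), fun c hc => absurd hc (hi ▸ Set.notMem_empty c),
    fun c x => by simp only [Function.comp_apply, hψ, hF.2.2]⟩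

end SigmaAutomaton

theorem stmt_6_general {X : Type*} {I : Type*} (C : I → Type*)
    (δ : ∀ i, C i → X → C i)
    (hret : ∀ i, Retractable (δ i))
    (hhom : ∀ i j, ∃ φ : C i → C j, ∀ a x, φ (δ i a x) = δ j (φ a) x) :
    Retractable (fun (p : Σ i, C i) (x : X) => (⟨p.1, δ p.1 p.2 x⟩ : Σ i, C i)) := by
  intro B hB
  change IsSubaut (sigmaDelta δ) B at hB
  obtain ⟨⟨j, b⟩, hb⟩ := hB.1
  have hcomp : ∀ i, ∃ F, IsComponentRetractHom δ B i F := by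
    intro i
    by_cases hi : (Sigma.mk i ⁻¹' B).Nonempty
    · exact hB.exists_componentRetractHom (hret i) hi
    obtain ⟨ψ, hψ⟩ := hhom i j
    obtain ⟨F, hF⟩ := hB.exists_componentRetractHom (hret j) ⟨b, hb⟩
    exact ⟨F ∘ ψ, hF.comp hψ (Set.not_nonempty_iff_eq_empty.mp hi)⟩
  choose F hF using hcomp
  exact ⟨_, isRetractHom_sigma hF⟩

/-- Theorem 1: a strong direct sum of retractable automata is
retractable. -/
theorem stmt_6 {X : Type*} {I : Type*} (C : I → Type*) [∀ i, Nonempty (C i)]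
    (δ : ∀ i, C i → X → C i)
    (hret : ∀ i, Retractable (δ i))
    (hhom : ∀ i j, ∃ φ : C i → C j, ∀ a x, φ (δ i a x) = δ j (φ a) x) :
    Retractable (fun (p : Σ i, C i) (x : X) => (⟨p.1, δ p.1 p.2 x⟩ : Σ i, C i)) :=
  stmt_6_general C δ hret hhom
end

section
/- Every dilation of a retractable automaton is retractable. -/
universe u v

/-!
A subautomaton `C` of the dilation meets `B` in a subautomaton of `B` (every transition lands in `B`),
so `B` retracts onto `C ∩ B` by some `ψ`. The retraction of the whole automaton onto `C` is the identity
on `C` and `ψ ∘ φ` off `C`; it agrees with `ψ` on `B`, and every transition of the dilation factors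
through `φ` into `B`, which makes it a homomorphism.
-/

section Dilation

variable {A X : Type*} {δ : A → X → A} {B C : Set A}

theorem IsSubaut.inter (hC : IsSubaut δ C) (hB : IsSubaut δ B) (hne : (C ∩ B).Nonempty) :
    IsSubaut δ (C ∩ B) :=
  ⟨hne, fun b hb x => ⟨hC.2 b hb.1 x, hB.2 b hb.2 x⟩⟩

theorem IsDilationOf.transition_mem (hdil : IsDilationOf δ B) (a : A) (x : X) : δ a x ∈ B := by
  obtain ⟨hB, φ, hφB, -, hφδ⟩ := hdil
  rw [hφδ]
  exact hB.2 _ (hφB a) x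

theorem IsDilationOf.isSubaut_inter [Nonempty X] (hdil : IsDilationOf δ B) (hC : IsSubaut δ C) :
    IsSubaut δ (C ∩ B) := by
  obtain ⟨c, hc⟩ := hC.1
  obtain ⟨x⟩ := ‹Nonempty X›
  exact hC.inter hdil.1 ⟨δ c x, hC.2 c hc x, hdil.transition_mem c x⟩

open Classical in
theorem isRetract_of_isEmpty [IsEmpty X] (hC : C.Nonempty) : IsRetract δ C := by
  obtain ⟨c, hc⟩ := hC
  refine ⟨C.piecewise id fun _ => c, fun a => ?_, fun b hb => Set.piecewise_eq_of_mem _ _ _ hb,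
    fun _ x => isEmptyElim x⟩
  by_cases ha : a ∈ C
  · simpa [Set.piecewise_eq_of_mem _ _ _ ha]
  · simpa [Set.piecewise_eq_of_notMem _ _ _ ha]

variable {φ ψ : A → A}

open Classical in
theorem piecewise_comp_eq_of_mem (hφfix : ∀ b ∈ B, φ b = b) (hψfix : ∀ c ∈ C ∩ B, ψ c = c)
    {b : A} (hb : b ∈ B) : C.piecewise id (ψ ∘ φ) b = ψ b := by
  by_cases hbC : b ∈ C
  · rw [Set.piecewise_eq_of_mem _ _ _ hbC, id, hψfix b ⟨hbC, hb⟩]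
  · rw [Set.piecewise_eq_of_notMem _ _ _ hbC, Function.comp_apply, hφfix b hb]

open Classical in
theorem isRetractHom_piecewise_comp (hCδ : ∀ c ∈ C, ∀ x, δ c x ∈ C) (hδB : ∀ a x, δ a x ∈ B)
    (hφB : ∀ a, φ a ∈ B) (hφfix : ∀ b ∈ B, φ b = b) (hφδ : ∀ a x, δ a x = δ (φ a) x)
    (hψC : ∀ b ∈ B, ψ b ∈ C) (hψfix : ∀ c ∈ C ∩ B, ψ c = c)
    (hψδ : ∀ b ∈ B, ∀ x, ψ (δ b x) = δ (ψ b) x) :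
    IsRetractHom δ C (C.piecewise id (ψ ∘ φ)) := by
  refine ⟨fun a => ?_, fun b hb => Set.piecewise_eq_of_mem _ _ _ hb, fun a x => ?_⟩
  · by_cases ha : a ∈ C
    · rwa [Set.piecewise_eq_of_mem _ _ _ ha]
    · rw [Set.piecewise_eq_of_notMem _ _ _ ha]
      exact hψC _ (hφB a)
  · by_cases ha : a ∈ C
    · rw [Set.piecewise_eq_of_mem _ _ _ ha, Set.piecewise_eq_of_mem _ _ _ (hCδ a ha x), id, id]
    · rw [piecewise_comp_eq_of_mem hφfix hψfix (hδB a x), Set.piecewise_eq_of_notMem _ _ _ ha,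
        Function.comp_apply, hφδ, hψδ _ (hφB a)]

end Dilation

/-- Theorem 5: every dilation of a retractable automaton is
retractable. -/
theorem stmt_13 {A X : Type*} (δ : A → X → A) (B : Set A)
    (hdil : IsDilationOf δ B) (hB : RetractableOn δ B) :
    Retractable δ := by
  intro C hC
  cases isEmpty_or_nonempty X with
  | inl => exact isRetract_of_isEmpty hC.1
  | inr =>
    obtain ⟨ψ, hψC, hψfix, hψδ⟩ := hB (C ∩ B) Set.inter_subset_right (hdil.isSubaut_inter hC)
    have hδB := hdil.transition_mem
    obtain ⟨-, φ, hφB, hφfix, hφδ⟩ := hdil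
    exact ⟨_, isRetractHom_piecewise_comp hC.2 hδB hφB hφfix hφδ
      (fun b hb => (hψC b hb).1) hψfix hψδ⟩
end

section
/- Every retractable automaton is a dilation of a semiconnected retractable automaton; specifically, a retractable automaton A is a dilation of the subautomaton B with state set δ(A,X) = {δ(a,x) : a ∈ A, x ∈ X}, and B is semiconnected and retractable. -/
universe u v

/-! A retraction `φ` onto the subautomaton `δ(A,X)` fixes every `δ(a,x)`, so being a homomorphism
gives `δ(a,x) = φ(δ(a,x)) = δ(φ a, x)`: the automaton is a dilation of `δ(A,X)`. For
semiconnectedness, a state `δ(a,x)` of a subautomaton `C` is reached in one step from `φ a ∈ C`,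
where `φ` is a retraction onto `C`. -/

theorem isSubaut_setOf_transition {A X : Type*} [Nonempty A] [Nonempty X] (δ : A → X → A) :
    IsSubaut δ {b | ∃ a x, δ a x = b} := by
  obtain ⟨a⟩ := ‹Nonempty A›
  obtain ⟨x⟩ := ‹Nonempty X›
  exact ⟨⟨δ a x, a, x, rfl⟩, fun b _ y => ⟨b, y, rfl⟩⟩

namespace IsRetractHom

variable {A X : Type*} {δ : A → X → A} {B : Set A} {φ : A → A}

theorem transition_eq_of_mem (hφ : IsRetractHom δ B φ) {a : A} {x : X} (hax : δ a x ∈ B) :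
    δ (φ a) x = δ a x :=
  (hφ.2.2 a x).symm.trans (hφ.2.1 _ hax)

theorem isDilationOf (hφ : IsRetractHom δ B φ) (hB : IsSubaut δ B)
    (htrans : ∀ a x, δ a x ∈ B) : IsDilationOf δ B :=
  ⟨hB, φ, hφ.1, hφ.2.1, fun a x => (hφ.transition_eq_of_mem (htrans a x)).symm⟩

end IsRetractHom

namespace Retractable

variable {A X : Type*} {δ : A → X → A}

theorem retractableOn (h : Retractable δ) (D : Set A) : RetractableOn δ D := by
  intro C _ hC
  obtain ⟨φ, hφC, hφfix, hφhom⟩ := h C hC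
  exact ⟨φ, fun a _ => hφC a, hφfix, fun a _ x => hφhom a x⟩

theorem semiconnectedOn_setOf_transition (h : Retractable δ) :
    SemiconnectedOn δ {b | ∃ a x, δ a x = b} := by
  rintro C hCB hC _ hc
  obtain ⟨a, x, rfl⟩ := hCB hc
  obtain ⟨φ, hφ⟩ := h C hC
  exact ⟨φ a, hφ.1 a, [x], List.cons_ne_nil x [], hφ.transition_eq_of_mem hc⟩

end Retractable

/-- Theorem 6: a retractable automaton is a dilation of the
semiconnected retractable subautomaton on `δ(A,X)`. -/
theorem stmt_14 {A X : Type*} [Nonempty A] [Nonempty X]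
    (δ : A → X → A) (h : Retractable δ) :
    IsDilationOf δ {b | ∃ a x, δ a x = b} ∧
    RetractableOn δ {b | ∃ a x, δ a x = b} ∧
    SemiconnectedOn δ {b | ∃ a x, δ a x = b} := by
  have hB := isSubaut_setOf_transition δ
  obtain ⟨φ, hφ⟩ := h _ hB
  exact ⟨hφ.isDilationOf hB fun a x => ⟨a, x, rfl⟩, h.retractableOn _,
    h.semiconnectedOn_setOf_transition⟩
end
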